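/- arXiv:2501.09865 — 7 statements merged into one kernel-verified Lean document; each statement's English description precedes it below -/
import Mathlib

section
/- Let H ≤ G₁ ≤ G₂ be groups and ℓ a prime. If the pair G₂/G₁ is ℓ-divisible witnessed by δ₂ subgroups and the pair G₁/H is ℓ-divisible witnessed by δ₁ subgroups, then G₂/H is ℓ-divisible witnessed by δ₁ + δ₂ subgroups. In particular, δ_ℓ(G₂/H) ≤ δ_ℓ(G₂/G₁) + δ_ℓ(G₁/H). -/
/-!
Concatenate the two families, pushing the subgroups of `G₁` forward into `G₂`. An element of
order `ℓ` outside `H` but inside `G₁` is handled by a pushed-forward subgroup, since conjugacy and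
avoiding `H` survive the inclusion `G₁ ≤ G₂`. One outside `G₁` is handled by a subgroup of the
outer family, since a conjugacy class missing `G₁` also misses `H ≤ G₁`.
-/

/-- The pair `G/H` is `ℓ`-divisible, witnessed by `δ` intermediate subgroups. -/
def LDiv (ℓ : ℕ) {G : Type*} [Group G] (H : Subgroup G) (δ : ℕ) : Prop :=
  ∃ Gs : Fin δ → Subgroup G,
    (∀ i, H ≤ Gs i) ∧
    ∀ σ : G, σ ∉ H → orderOf σ = ℓ →
      ∃ i : Fin δ, ∃ τ : G, IsConj σ τ ∧ τ ∈ Gs i ∧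
        ∀ π ∈ Gs i, π * τ * π⁻¹ ∉ H

section ConjAvoids

variable {G : Type*} [Group G]

/-- The condition `τ ∈ cl_G(σ) ∩ K`, `cl_K(τ) ∩ H = ∅` in the definition of `ℓ`-divisibility. -/
def ConjAvoids (H K : Subgroup G) (σ : G) : Prop :=
  ∃ τ : G, IsConj σ τ ∧ τ ∈ K ∧ ∀ π ∈ K, π * τ * π⁻¹ ∉ H

theorem ConjAvoids.of_le {H H' K : Subgroup G} {σ : G} (hHH' : H ≤ H')
    (h : ConjAvoids H' K σ) : ConjAvoids H K σ := by
  obtain ⟨τ, hστ, hτK, havoid⟩ := h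
  exact ⟨τ, hστ, hτK, fun π hπ hmem => havoid π hπ (hHH' hmem)⟩

theorem ConjAvoids.map_subtype {G₁ : Subgroup G} {H K : Subgroup G₁} {σ : G₁}
    (h : ConjAvoids H K σ) : ConjAvoids (H.map G₁.subtype) (K.map G₁.subtype) σ := by
  obtain ⟨τ, hστ, hτK, havoid⟩ := h
  refine ⟨τ, G₁.subtype.map_isConj hστ, ⟨τ, hτK, rfl⟩, ?_⟩
  rintro _ ⟨π, hπ, rfl⟩ ⟨ρ, hρ, hρτ⟩
  rw [Subtype.val_injective (by simpa using hρτ : ρ.1 = (π * τ * π⁻¹).1)] at hρ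
  exact havoid π hπ hρ

theorem lDiv_iff_conjAvoids {ℓ δ : ℕ} {H : Subgroup G} :
    LDiv ℓ H δ ↔ ∃ Gs : Fin δ → Subgroup G, (∀ i, H ≤ Gs i) ∧
      ∀ σ : G, σ ∉ H → orderOf σ = ℓ → ∃ i, ConjAvoids H (Gs i) σ :=
  Iff.rfl

end ConjAvoids

theorem LDiv.tower {G : Type*} [Group G] {ℓ δ₁ δ₂ : ℕ} {G₁ H : Subgroup G}
    (h₂ : LDiv ℓ G₁ δ₂) (hHG : H ≤ G₁) (h₁ : LDiv ℓ (H.subgroupOf G₁) δ₁) :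
    LDiv ℓ H (δ₁ + δ₂) := by
  rw [lDiv_iff_conjAvoids] at *
  obtain ⟨Gs₂, hle₂, hdiv₂⟩ := h₂
  obtain ⟨Gs₁, hle₁, hdiv₁⟩ := h₁
  have hmap : (H.subgroupOf G₁).map G₁.subtype = H := Subgroup.map_subgroupOf_eq_of_le hHG
  refine ⟨Fin.append (fun i => (Gs₁ i).map G₁.subtype) Gs₂,
    (Fin.forall_fin_add _).2 ⟨fun i => ?_, fun i => ?_⟩, fun σ hσH hord => ?_⟩
  · simpa only [Fin.append_left, hmap] using Subgroup.map_mono (f := G₁.subtype) (hle₁ i)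
  · simpa only [Fin.append_right] using hHG.trans (hle₂ i)
  by_cases hσG : σ ∈ G₁
  · obtain ⟨i, hi⟩ := hdiv₁ ⟨σ, hσG⟩ (by simpa [Subgroup.mem_subgroupOf] using hσH)
      (by rw [Subgroup.orderOf_mk, hord])
    refine ⟨Fin.castAdd δ₂ i, ?_⟩
    simpa only [Fin.append_left, hmap] using hi.map_subtype
  · obtain ⟨i, hi⟩ := hdiv₂ σ hσG hord
    refine ⟨Fin.natAdd δ₁ i, ?_⟩
    simpa only [Fin.append_right] using hi.of_le hHG

theorem LDiv.sInf_mem {G : Type*} [Group G] {ℓ δ : ℕ} {H : Subgroup G} (h : LDiv ℓ H δ) :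
    LDiv ℓ H (sInf {δ | LDiv ℓ H δ}) :=
  Nat.sInf_mem (s := {δ | LDiv ℓ H δ}) ⟨δ, h⟩

theorem stmt1_general {G₂ : Type*} [Group G₂] (ℓ : ℕ)
    (G₁ : Subgroup G₂) (H : Subgroup G₂) (hHG : H ≤ G₁) (δ₁ δ₂ : ℕ)
    (h₂ : LDiv ℓ G₁ δ₂) (h₁ : LDiv ℓ (H.subgroupOf G₁) δ₁) :
    LDiv ℓ H (δ₁ + δ₂) ∧
      sInf {δ | LDiv ℓ H δ} ≤
        sInf {δ | LDiv ℓ G₁ δ} + sInf {δ | LDiv ℓ (H.subgroupOf G₁) δ} := by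
  refine ⟨h₂.tower hHG h₁, ?_⟩
  rw [add_comm]
  exact Nat.sInf_le ((LDiv.sInf_mem h₂).tower hHG (LDiv.sInf_mem h₁))

/-- Tower lemma: if `G₂/G₁` is `ℓ`-divisible with `δ₂` subgroups and `G₁/H` is
`ℓ`-divisible with `δ₁` subgroups, then `G₂/H` is `ℓ`-divisible with `δ₁ + δ₂`
subgroups; in particular `δ_ℓ(G₂/H) ≤ δ_ℓ(G₂/G₁) + δ_ℓ(G₁/H)`. -/
theorem stmt1 {G₂ : Type*} [Group G₂] (ℓ : ℕ) (hℓ : ℓ.Prime)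
    (G₁ : Subgroup G₂) (H : Subgroup G₂) (hHG : H ≤ G₁) (δ₁ δ₂ : ℕ)
    (h₂ : LDiv ℓ G₁ δ₂) (h₁ : LDiv ℓ (H.subgroupOf G₁) δ₁) :
    LDiv ℓ H (δ₁ + δ₂) ∧
      sInf {δ | LDiv ℓ H δ} ≤
        sInf {δ | LDiv ℓ G₁ δ} + sInf {δ | LDiv ℓ (H.subgroupOf G₁) δ} :=
  stmt1_general ℓ G₁ H hHG δ₁ δ₂ h₂ h₁
end

section
/- Let G be a finite group with a unique (normal) Sylow ℓ-subgroup S, and let H ≤ G be any subgroup. Then for every σ ∈ G of order a power of ℓ with σ^ℓ ∈ H and σ ∉ H, there exists a subgroup G' of G with H ≤ G', σ ∈ G', and the G'-conjugacy class of σ disjoint from H; i.e., the pair G/H is strongly ℓ-divisible. -/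
/-!
An element σ of `ℓ`-power order lies in the normal Sylow subgroup `S`, which is nilpotent.
Take `K` maximal among the subgroups of `S` that contain `H ⊓ S`, are normalized by `H` and
miss σ. By the normalizer condition `N_S(K)` is strictly larger than `K`, and it is still
normalized by `H`, so maximality forces σ ∈ `N_S(K)`. Then `G' = N_G(K)` works: a
`G'`-conjugate of σ lying in `H` lies in `H ⊓ S ≤ K`, hence σ ∈ `K`.
-/

open Subgroup

theorem Sylow.mem_of_normal_of_orderOf_eq_pow {G : Type*} [Group G] [Finite G] {p : ℕ}
    [Fact p.Prime] (P : Sylow p G) (hP : (P : Subgroup G).Normal) {g : G}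
    (hg : ∃ m : ℕ, orderOf g = p ^ m) : g ∈ P := by
  obtain ⟨m, hm⟩ := hg
  obtain ⟨Q, hQ⟩ := (IsPGroup.of_card ((Nat.card_zpowers g).trans hm)).exists_le_sylow
  have : Unique (Sylow p G) := Sylow.unique_of_normal P hP
  exact Subsingleton.elim Q P ▸ hQ (mem_zpowers g)

namespace Subgroup

variable {G : Type*} [Group G]

theorem le_normalizer_inf_of_normal {A N H : Subgroup G} [N.Normal]
    (hA : H ≤ normalizer (A : Set G)) : H ≤ normalizer ((A ⊓ N : Subgroup G) : Set G) :=
  (le_inf hA le_normalizer_of_normal).trans inf_normalizer_le_normalizer_inf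

theorem lt_normalizer_inf_of_isNilpotent {N K : Subgroup G} [Group.IsNilpotent N] (hK : K < N) :
    K < normalizer (K : Set G) ⊓ N := by
  have hKN : K.subgroupOf N < normalizer (K.subgroupOf N : Set N) :=
    Group.normalizerCondition_of_isNilpotent _
      (lt_top_iff_ne_top.mpr fun h => hK.not_ge (subgroupOf_eq_top.mp h))
  rw [← subgroupOf_normalizer_eq hK.le] at hKN
  obtain ⟨x, hxK, hx⟩ := (SetLike.lt_iff_le_and_exists.mp hKN).2
  exact SetLike.lt_iff_le_and_exists.mpr ⟨le_inf le_normalizer hK.le, (x : G),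
    mem_inf.mpr ⟨mem_subgroupOf.mp hxK, x.2⟩, fun h => hx (mem_subgroupOf.mpr h)⟩

theorem exists_le_normalizer_mem_normalizer_notMem [Finite G] {N H : Subgroup G} (hN : N.Normal)
    [Group.IsNilpotent N] {σ : G} (hσN : σ ∈ N) (hσH : σ ∉ H) :
    ∃ K : Subgroup G, H ⊓ N ≤ K ∧ H ≤ normalizer (K : Set G) ∧
      σ ∈ normalizer (K : Set G) ∧ σ ∉ K := by
  let admissible : Set (Subgroup G) :=
    {K | H ⊓ N ≤ K ∧ K ≤ N ∧ H ≤ normalizer (K : Set G) ∧ σ ∉ K}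
  have hHN : H ⊓ N ∈ admissible :=
    ⟨le_rfl, inf_le_right, le_normalizer_inf_of_normal le_normalizer, fun h => hσH h.1⟩
  obtain ⟨K, hK⟩ := admissible.toFinite.exists_maximal ⟨_, hHN⟩
  obtain ⟨hHNK, hKN, hHK, hσK⟩ := hK.prop
  refine ⟨K, hHNK, hHK, ?_, hσK⟩
  have hlt : K < normalizer (K : Set G) ⊓ N :=
    lt_normalizer_inf_of_isNilpotent (SetLike.lt_iff_le_and_exists.mpr ⟨hKN, σ, hσN, hσK⟩)
  by_contra hσ
  exact hK.not_gt ⟨hlt.le.trans' hHNK, inf_le_right,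
    le_normalizer_inf_of_normal (hHK.trans le_normalizer), fun h => hσ h.1⟩ hlt

theorem exists_le_forall_conj_notMem [Finite G] {N H : Subgroup G} (hN : N.Normal)
    [Group.IsNilpotent N] {σ : G} (hσN : σ ∈ N) (hσH : σ ∉ H) :
    ∃ G' : Subgroup G, H ≤ G' ∧ σ ∈ G' ∧ ∀ π ∈ G', π * σ * π⁻¹ ∉ H := by
  obtain ⟨K, hHNK, hHK, hσK', hσK⟩ := exists_le_normalizer_mem_normalizer_notMem hN hσN hσH
  refine ⟨normalizer (K : Set G), hHK, hσK', fun π hπ hconj => hσK ?_⟩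
  exact (mem_normalizer_iff.mp hπ σ).mpr (hHNK ⟨hconj, hN.conj_mem σ hσN π⟩)

end Subgroup

/-- If a finite group `G` has a normal (hence unique) Sylow `ℓ`-subgroup, then
for every subgroup `H ≤ G` and every `σ ∉ H` of `ℓ`-power order with
`σ^ℓ ∈ H`, there is a subgroup `G'` with `H ≤ G'`, `σ ∈ G'`, and the
`G'`-conjugacy class of `σ` disjoint from `H`; i.e. `G/H` is strongly
`ℓ`-divisible. -/
theorem stmt4 {G : Type*} [Group G] [Finite G] (ℓ : ℕ) [Fact ℓ.Prime]
    (S : Sylow ℓ G) (hS : (S : Subgroup G).Normal) (H : Subgroup G) :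
    ∀ σ : G, σ ∉ H → σ ^ ℓ ∈ H → (∃ m : ℕ, orderOf σ = ℓ ^ m) →
      ∃ G' : Subgroup G, H ≤ G' ∧ σ ∈ G' ∧ ∀ π ∈ G', π * σ * π⁻¹ ∉ H := by
  intro σ hσH _ hσ
  have : Group.IsNilpotent S := S.isPGroup'.isNilpotent
  exact exists_le_forall_conj_notMem hS (S.mem_of_normal_of_orderOf_eq_pow hS hσ) hσH
end

section
/- Let G be a finite nilpotent group and H ≤ G any subgroup, and let ℓ be any prime. Then the pair G/H is strongly ℓ-divisible, and δ_ℓ(G/H) is at most the nilpotency class of G. -/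
/-- The pair `G/H` is strongly `ℓ`-divisible, witnessed by `δ` subgroups. -/
def SLDiv (ℓ : ℕ) {G : Type*} [Group G] (H : Subgroup G) (δ : ℕ) : Prop :=
  ∃ Gs : Fin δ → Subgroup G,
    (∀ i, H ≤ Gs i) ∧
    ∀ σ : G, σ ∉ H → σ ^ ℓ ∈ H → (∃ m : ℕ, orderOf σ = ℓ ^ m) →
      ∃ i : Fin δ, σ ∈ Gs i ∧ ∀ π ∈ Gs i, π * σ * π⁻¹ ∉ H

/-!
The witnesses are the subgroups `H Z_{i+1}`, `Z_j` the upper central series, for `i` below the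
nilpotency class. Given `σ ∉ H`, pick the least `n` with `σ ∈ H Z_n`, so `n ≥ 1`. If some `h z ∈ H Z_n` conjugated `σ` into `H`, then so would `z`, and
as `[z, σ] ∈ Z_{n-1}` we would get `σ = [z, σ]⁻¹ (z σ z⁻¹) ∈ H Z_{n-1}`, against minimality.
-/

open commutatorElement

namespace Subgroup

variable {G : Type*} [Group G]

theorem mem_sup_upperCentralSeries_of_conj_mem {H : Subgroup G} {k : ℕ} {σ π : G}
    (hπ : π ∈ H ⊔ upperCentralSeries G (k + 1)) (hconj : π * σ * π⁻¹ ∈ H) :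
    σ ∈ H ⊔ upperCentralSeries G k := by
  obtain ⟨h, hh, z, hz, rfl⟩ := mem_sup_of_normal_right.mp hπ
  have hzσ : z * σ * z⁻¹ ∈ H := by
    simpa [mul_assoc] using H.mul_mem (H.mul_mem (H.inv_mem hh) hconj) hh
  have hcomm : ⁅z, σ⁆ ∈ upperCentralSeries G k := mem_upperCentralSeries_succ_iff.mp hz σ
  have hσ : σ = ⁅z, σ⁆⁻¹ * (z * σ * z⁻¹) := by group
  rw [hσ]
  exact mul_mem (inv_mem (mem_sup_right hcomm)) (mem_sup_left hzσ)

theorem exists_mem_sup_upperCentralSeries_conj_not_mem [Group.IsNilpotent G]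
    {H : Subgroup G} {σ : G} (hσ : σ ∉ H) :
    ∃ i : Fin (Group.nilpotencyClass G),
      σ ∈ H ⊔ upperCentralSeries G (i + 1) ∧
        ∀ π ∈ H ⊔ upperCentralSeries G (i + 1), π * σ * π⁻¹ ∉ H := by
  classical
  have hclass : σ ∈ H ⊔ upperCentralSeries G (Group.nilpotencyClass G) := by simp
  have hex : ∃ n, σ ∈ H ⊔ upperCentralSeries G n := ⟨_, hclass⟩
  obtain ⟨k, hk⟩ : ∃ k, Nat.find hex = k + 1 := by
    refine Nat.exists_eq_succ_of_ne_zero fun h0 => hσ ?_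
    simpa [h0] using Nat.find_spec hex
  have hkc : k < Group.nilpotencyClass G := by
    have := Nat.find_min' hex hclass
    omega
  refine ⟨⟨k, hkc⟩, hk ▸ Nat.find_spec hex, fun π hπ hconj => ?_⟩
  exact Nat.find_min hex (hk ▸ k.lt_succ_self) (mem_sup_upperCentralSeries_of_conj_mem hπ hconj)

end Subgroup

theorem stmt5_general {G : Type*} [Group G] [Group.IsNilpotent G]
    (ℓ : ℕ) (H : Subgroup G) :
    SLDiv ℓ H (Group.nilpotencyClass G) ∧
      sInf {δ | LDiv ℓ H δ} ≤ Group.nilpotencyClass G := by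
  let Gs : Fin (Group.nilpotencyClass G) → Subgroup G :=
    fun i => H ⊔ Subgroup.upperCentralSeries G (i + 1)
  refine ⟨⟨Gs, fun _ => le_sup_left, fun σ hσ _ _ => ?_⟩, Nat.sInf_le ?_⟩
  · exact Subgroup.exists_mem_sup_upperCentralSeries_conj_not_mem hσ
  · refine ⟨Gs, fun _ => le_sup_left, fun σ hσ _ => ?_⟩
    obtain ⟨i, hmem, hconj⟩ := Subgroup.exists_mem_sup_upperCentralSeries_conj_not_mem hσ
    exact ⟨i, σ, IsConj.refl σ, hmem, hconj⟩

/-- For a finite nilpotent group `G`, any `H ≤ G`, and any prime `ℓ`, the pair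
`G/H` is strongly `ℓ`-divisible with at most `nilpotencyClass G` witnessing
subgroups, and `δ_ℓ(G/H)` is at most the nilpotency class of `G`. -/
theorem stmt5 {G : Type*} [Group G] [Finite G] [Group.IsNilpotent G]
    (ℓ : ℕ) (hℓ : ℓ.Prime) (H : Subgroup G) :
    SLDiv ℓ H (Group.nilpotencyClass G) ∧
      sInf {δ | LDiv ℓ H δ} ≤ Group.nilpotencyClass G :=
  stmt5_general ℓ H
end

section
/- Let D_n = ⟨r, s | r^n, s^2, (rs)^2⟩ with 4 | n, and H = ⟨s⟩. Then D_n/H is 2-divisible with δ₂(D_n/H) = 2. -/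
/-! Conjugation sends `sr i` to `sr (i + 2 * y)` and `r i` to `r (± i)`. Hence, for even `n`,
no conjugate of a rotation `r i ≠ 1` or of the odd reflection `sr 1` lies in `H = {1, sr 0}`, and
`⊤` works for them. The even reflections are conjugate to `sr 0`, so they need a proper
subgroup: in the image `{r (2 * k), sr (2 * k)}` of the doubling map, the conjugates of `sr 2` are
`sr (2 * (1 + 2 * y))`, never `sr 0` when `4 ∣ n`. A single subgroup `K ≥ H` cannot serve both
`sr 1` and `sr 2`: it would contain some `sr (1 + 2 * k)` and `sr (2 * d)`, hence `r (1 + 2 * k)`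
and `r (2 * d)`, hence `r d`, which conjugates `sr (2 * d)` to `sr 0`. -/
open DihedralGroup

theorem not_lDiv_zero {G : Type*} [Group G] {H : Subgroup G} {ℓ : ℕ} {σ : G} (hσ : σ ∉ H)
    (hℓ : orderOf σ = ℓ) : ¬ LDiv ℓ H 0 := by
  rintro ⟨_, -, h⟩
  exact (h σ hσ hℓ).choose.elim0

namespace ZMod

variable {n : ℕ}

theorem exists_eq_two_mul_or_eq_two_mul_add_one (j : ZMod n) :
    ∃ c, j = 2 * c ∨ j = 2 * c + 1 := by
  obtain ⟨m, rfl⟩ := intCast_surjective j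
  obtain ⟨c, rfl | rfl⟩ := Int.even_or_odd' m
  · exact ⟨c, Or.inl (by push_cast; ring)⟩
  · exact ⟨c, Or.inr (by push_cast; ring)⟩

theorem one_add_two_mul_ne_zero (h : 2 ∣ n) (y : ZMod n) : 1 + 2 * y ≠ 0 := by
  intro hy
  have key : ∀ z : ZMod 2, 1 + 2 * z ≠ 0 := by decide
  apply key (castHom h (ZMod 2) y)
  simpa only [map_add, map_mul, map_one, map_ofNat, map_zero] using
    congrArg (castHom h (ZMod 2)) hy

theorem two_mul_one_add_two_mul_ne_zero (h : 4 ∣ n) (y : ZMod n) : 2 * (1 + 2 * y) ≠ 0 := by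
  intro hy
  have key : ∀ z : ZMod 4, 2 * (1 + 2 * z) ≠ 0 := by decide
  apply key (castHom h (ZMod 4) y)
  simpa only [map_add, map_mul, map_one, map_ofNat, map_zero] using
    congrArg (castHom h (ZMod 4)) hy

end ZMod

namespace DihedralGroup

variable {n : ℕ}

def map {m : ℕ} (f : ZMod n →+ ZMod m) : DihedralGroup n →* DihedralGroup m where
  toFun
    | r i => r (f i)
    | sr i => sr (f i)
  map_one' := congrArg r (map_zero f)
  map_mul' := by
    rintro (i | i) (j | j) <;> simp [r_mul_r, r_mul_sr, sr_mul_r, sr_mul_sr, map_add, map_sub]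

@[simp]
theorem map_sr {m : ℕ} (f : ZMod n →+ ZMod m) (i : ZMod n) : map f (sr i) = sr (f i) := rfl

theorem mem_zpowers_sr_iff {i : ZMod n} {x : DihedralGroup n} :
    x ∈ Subgroup.zpowers (sr i) ↔ x = 1 ∨ x = sr i := by
  rw [(orderOf_pos_iff.1 (orderOf_sr i ▸ two_pos)).mem_zpowers_iff_mem_range_orderOf,
    orderOf_sr]
  simp [Finset.range_add_one, or_comm]

theorem r_mem_zpowers_sr_zero_iff {i : ZMod n} : r i ∈ Subgroup.zpowers (sr 0) ↔ i = 0 := by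
  simp only [mem_zpowers_sr_iff, ← r_zero, r.injEq, reduceCtorEq, or_false]

theorem sr_mem_zpowers_sr_zero_iff {i : ZMod n} : sr i ∈ Subgroup.zpowers (sr 0) ↔ i = 0 := by
  simp only [mem_zpowers_sr_iff, ← r_zero, sr.injEq, reduceCtorEq, false_or]

theorem isConj_r {i : ZMod n} {τ : DihedralGroup n} (h : IsConj (r i) τ) :
    τ = r i ∨ τ = r (-i) := by
  obtain ⟨x | x, rfl⟩ := isConj_iff.1 h
  · left; simp only [r_mul_r, inv_r]; congr 1; ring
  · right; simp only [sr_mul_r, sr_mul_sr, inv_sr]; congr 1; ring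

theorem isConj_sr_iff {i : ZMod n} {τ : DihedralGroup n} :
    IsConj (sr i) τ ↔ ∃ y, τ = sr (i + 2 * y) := by
  constructor
  · intro h
    obtain ⟨x | x, rfl⟩ := isConj_iff.1 h
    · refine ⟨-x, ?_⟩
      simp only [r_mul_sr, sr_mul_r, inv_r]
      congr 1; ring
    · refine ⟨x - i, ?_⟩
      simp only [sr_mul_sr, r_mul_sr, inv_sr]
      congr 1; ring
  · rintro ⟨y, rfl⟩
    refine isConj_iff.2 ⟨r (-y), ?_⟩
    simp only [r_mul_sr, sr_mul_r, inv_r]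
    congr 1; ring

theorem r_mem_of_sr_mem {K : Subgroup (DihedralGroup n)} {i : ZMod n} (h₀ : sr 0 ∈ K)
    (h : sr i ∈ K) : r i ∈ K := by
  simpa [sr_mul_sr] using mul_mem h₀ h

theorem r_mem_of_r_one_add_two_mul_mem {K : Subgroup (DihedralGroup n)} {k d : ZMod n}
    (h₁ : r (1 + 2 * k) ∈ K) (h₂ : r (2 * d) ∈ K) : r d ∈ K := by
  obtain ⟨k, rfl⟩ := ZMod.intCast_surjective k
  obtain ⟨d, rfl⟩ := ZMod.intCast_surjective d
  have h : r (d : ZMod n) = r (1 + 2 * (k : ZMod n)) ^ d * r (2 * (d : ZMod n)) ^ (-k) := by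
    rw [r_zpow, r_zpow, r_mul_r]
    congr 1; push_cast; ring
  exact h ▸ mul_mem (zpow_mem h₁ _) (zpow_mem h₂ _)

theorem conj_r_notMem_zpowers_sr_zero {i : ZMod n} (hi : i ≠ 0) (π : DihedralGroup n) :
    π * r i * π⁻¹ ∉ Subgroup.zpowers (sr 0) := by
  rcases isConj_r (isConj_iff.2 ⟨π, rfl⟩) with h | h <;> rw [h, r_mem_zpowers_sr_zero_iff]
  exacts [hi, neg_ne_zero.2 hi]

theorem conj_sr_one_notMem_zpowers_sr_zero (h : 2 ∣ n) (π : DihedralGroup n) :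
    π * sr 1 * π⁻¹ ∉ Subgroup.zpowers (sr 0) := by
  obtain ⟨y, hy⟩ := isConj_sr_iff.1 (isConj_iff.2 ⟨π, rfl⟩)
  rw [hy, sr_mem_zpowers_sr_zero_iff]
  exact ZMod.one_add_two_mul_ne_zero h y

theorem conj_sr_two_notMem_zpowers_sr_zero (h : 4 ∣ n) {π : DihedralGroup n}
    (hπ : π ∈ (map (AddMonoidHom.mulLeft 2)).range) :
    π * sr 2 * π⁻¹ ∉ Subgroup.zpowers (sr 0) := by
  obtain ⟨x, rfl⟩ := hπ
  obtain ⟨y, hy⟩ := isConj_sr_iff.1 (isConj_iff.2 ⟨x, rfl⟩ : IsConj (sr (1 : ZMod n)) _)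
  have hmap : map (AddMonoidHom.mulLeft 2) x * sr 2 * (map (AddMonoidHom.mulLeft 2) x)⁻¹ =
      map (AddMonoidHom.mulLeft 2) (x * sr 1 * x⁻¹) := by simp
  rw [hmap, hy, map_sr, sr_mem_zpowers_sr_zero_iff]
  exact ZMod.two_mul_one_add_two_mul_ne_zero h y

theorem sr_one_notMem_zpowers_sr_zero (h : 2 ∣ n) :
    sr (1 : ZMod n) ∉ Subgroup.zpowers (sr 0) := by
  simpa using conj_sr_one_notMem_zpowers_sr_zero h 1

theorem sr_two_notMem_zpowers_sr_zero (h : 4 ∣ n) :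
    sr (2 : ZMod n) ∉ Subgroup.zpowers (sr 0) := by
  simpa using conj_sr_two_notMem_zpowers_sr_zero h (one_mem _)

theorem lDiv_two_zpowers_sr_zero (h : 4 ∣ n) : LDiv 2 (Subgroup.zpowers (sr (0 : ZMod n))) 2 := by
  refine ⟨![(map (AddMonoidHom.mulLeft 2)).range, ⊤], fun i => ?_, ?_⟩
  · fin_cases i
    · exact Subgroup.zpowers_le.2 ⟨sr 0, by simp⟩
    · exact le_top
  rintro (j | j) hσ -
  · exact ⟨1, r j, .refl _, Subgroup.mem_top _, fun π _ =>
      conj_r_notMem_zpowers_sr_zero (mt r_mem_zpowers_sr_zero_iff.2 hσ) π⟩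
  obtain ⟨c, rfl | rfl⟩ := ZMod.exists_eq_two_mul_or_eq_two_mul_add_one j
  · exact ⟨0, sr 2, isConj_sr_iff.2 ⟨1 - c, by ring_nf⟩, ⟨sr 1, by simp⟩, fun π hπ =>
      conj_sr_two_notMem_zpowers_sr_zero h hπ⟩
  · exact ⟨1, sr 1, isConj_sr_iff.2 ⟨-c, by ring_nf⟩, Subgroup.mem_top _, fun π _ =>
      conj_sr_one_notMem_zpowers_sr_zero ((dvd_mul_left 2 2).trans h) π⟩

theorem not_lDiv_one_zpowers_sr_zero (h : 4 ∣ n) :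
    ¬ LDiv 2 (Subgroup.zpowers (sr (0 : ZMod n))) 1 := by
  rintro ⟨Gs, hH, hGs⟩
  obtain ⟨i, _, hc₁, hm₁, -⟩ :=
    hGs (sr 1) (sr_one_notMem_zpowers_sr_zero ((dvd_mul_left 2 2).trans h)) (orderOf_sr 1)
  obtain ⟨j, τ, hc₂, hm₂, havoid⟩ :=
    hGs (sr 2) (sr_two_notMem_zpowers_sr_zero h) (orderOf_sr 2)
  obtain rfl := Subsingleton.elim i j
  obtain ⟨k, rfl⟩ := isConj_sr_iff.1 hc₁
  obtain ⟨y, rfl⟩ := isConj_sr_iff.1 hc₂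
  have h₀ : sr 0 ∈ Gs i := hH i (Subgroup.mem_zpowers _)
  have hr : r (1 + y) ∈ Gs i := r_mem_of_r_one_add_two_mul_mem (r_mem_of_sr_mem h₀ hm₁)
    (by simpa [mul_add] using r_mem_of_sr_mem h₀ hm₂)
  apply havoid _ hr
  rw [r_mul_sr, inv_r, sr_mul_r, sr_mem_zpowers_sr_zero_iff]
  ring

end DihedralGroup

theorem stmt7_general (n : ℕ) (h4 : 4 ∣ n) :
    LDiv 2 (Subgroup.zpowers (sr (0 : ZMod n))) 2 ∧
      sInf {δ | LDiv 2 (Subgroup.zpowers (sr (0 : ZMod n))) δ} = 2 := by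
  have hδ₂ := lDiv_two_zpowers_sr_zero h4
  refine ⟨hδ₂, IsLeast.csInf_eq ⟨hδ₂, fun δ hδ => ?_⟩⟩
  by_contra! hlt
  interval_cases δ
  · have h2 : 2 ∣ n := (dvd_mul_left 2 2).trans h4
    exact not_lDiv_zero (sr_one_notMem_zpowers_sr_zero h2) (orderOf_sr 1) hδ
  · exact not_lDiv_one_zpowers_sr_zero h4 hδ

/-- If `4 ∣ n`, then `D_n/⟨s⟩` is 2-divisible with `δ₂(D_n/⟨s⟩) = 2`. -/
theorem stmt7 (n : ℕ) (hn : 0 < n) (h4 : 4 ∣ n) :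
    LDiv 2 (Subgroup.zpowers (sr (0 : ZMod n))) 2 ∧
      sInf {δ | LDiv 2 (Subgroup.zpowers (sr (0 : ZMod n))) δ} = 2 :=
  stmt7_general n h4
end

section
/- Let H ≤ G be groups with G/H ℓ-divisible. Then δ_ℓ(G/H) ≤ 1 + (|H| − 1)/(ℓ − 1). More precisely, the number of witnessing subgroups needed is at most one more than the number of distinct subgroups of H of order ℓ. -/
theorem Nat.card_subtype_ne {α : Type*} [Finite α] (a : α) :
    Nat.card {x : α // x ≠ a} = Nat.card α - 1 := by
  classical
  have := Fintype.ofFinite α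
  simp [Nat.card_eq_fintype_card, Fintype.card_subtype_compl]

section

variable {G : Type*} [Group G]

open Subgroup

theorem Subgroup.eq_zpowers_of_card_prime {p : ℕ} (hp : p.Prime) {K : Subgroup G}
    (hK : Nat.card K = p) {x : G} (hx : x ∈ K) (hx1 : x ≠ 1) : K = zpowers x := by
  have : Finite K := Nat.finite_of_card_ne_zero (hK ▸ hp.ne_zero)
  refine (eq_of_le_of_card_ge (zpowers_le.mpr hx) ?_).symm
  have hdvd : orderOf x ∣ p := by
    simpa [hK] using _root_.orderOf_dvd_natCard (⟨x, hx⟩ : K)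
  rcases (Nat.dvd_prime hp).mp hdvd with h1 | hxp
  · exact absurd (orderOf_eq_one_iff.mp h1) hx1
  · rw [Nat.card_zpowers, hxp, hK]

theorem conj_mem_zpowers_conj (c : G) {x y : G} (h : x ∈ zpowers y) :
    c * x * c⁻¹ ∈ zpowers (c * y * c⁻¹) := by
  obtain ⟨k, rfl⟩ := mem_zpowers_iff.mp h
  exact mem_zpowers_iff.mpr ⟨k, conj_zpow⟩

theorem Subgroup.finite_subtype_le (H : Subgroup G) [Finite H] (P : Subgroup G → Prop) :
    Finite {K : Subgroup G // K ≤ H ∧ P K} := by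
  refine Finite.of_injective (fun K => K.1.subgroupOf H) fun K K' hKK' => Subtype.ext ?_
  simpa [inf_of_le_left K.2.1, inf_of_le_left K'.2.1] using subgroupOf_inj.mp hKK'

theorem card_subgroups_card_prime_mul_le {p : ℕ} (hp : p.Prime) (H : Subgroup G) [Finite H] :
    Nat.card {K : Subgroup G // K ≤ H ∧ Nat.card K = p} * (p - 1) ≤ Nat.card H - 1 := by
  set S := {K : Subgroup G // K ≤ H ∧ Nat.card K = p}
  have := finite_subtype_le H (fun K => Nat.card K = p)
  have := Fintype.ofFinite S
  have : ∀ K : S, Finite K.1 := fun K =>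
    Nat.finite_of_card_ne_zero (by rw [K.2.2]; exact hp.ne_zero)
  let f : (Σ K : S, {x : K.1 // x ≠ 1}) → {x : H // x ≠ 1} := fun ⟨K, x, hx⟩ =>
    ⟨⟨x, K.2.1 x.2⟩, fun h => hx (Subtype.ext (congrArg (fun y : H => (y : G)) h))⟩
  have hf : Function.Injective f := by
    rintro ⟨K, x, hx⟩ ⟨K', x', hx'⟩ hxx'
    have hG : (x : G) = x' := congrArg (fun y : {x : H // x ≠ 1} => (y.1 : G)) hxx'
    have hx1 : (x : G) ≠ 1 := fun h => hx (Subtype.ext h)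
    obtain rfl : K = K' := Subtype.ext <| by
      rw [eq_zpowers_of_card_prime hp K.2.2 x.2 hx1, hG,
        ← eq_zpowers_of_card_prime hp K'.2.2 x'.2 (hG ▸ hx1)]
    obtain rfl : x = x' := Subtype.ext hG
    rfl
  have hcard := Nat.card_le_card_of_injective f hf
  simp_rw [Nat.card_sigma, Nat.card_subtype_ne, fun K : S => K.2.2] at hcard
  simpa [S, Nat.card_eq_fintype_card] using hcard

theorem card_subgroups_card_prime_le {p : ℕ} (hp : p.Prime) (H : Subgroup G) [Finite H] :
    Nat.card {K : Subgroup G // K ≤ H ∧ Nat.card K = p} ≤ (Nat.card H - 1) / (p - 1) :=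
  (Nat.le_div_iff_mul_le (Nat.sub_pos_of_lt hp.one_lt)).mpr (card_subgroups_card_prime_mul_le hp H)

/-- `cl_{G₁}(τ) ∩ H = ∅`. -/
def ConjClassAvoids (G₁ H : Subgroup G) (τ : G) : Prop :=
  ∀ π ∈ G₁, π * τ * π⁻¹ ∉ H

theorem ConjClassAvoids.of_mem_zpowers {G₁ H : Subgroup G} {x y : G}
    (hx : ConjClassAvoids G₁ H x) (hxy : x ∈ zpowers y) : ConjClassAvoids G₁ H y :=
  fun π hπ hy => hx π hπ (zpowers_le.mpr hy (conj_mem_zpowers_conj π hxy))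

theorem exists_conjClassAvoids_of_mem_card_prime {p : ℕ} (hp : p.Prime) {G₁ H K : Subgroup G}
    (hK : Nat.card K = p) {h₀ τ₀ : G} (hh₀ : h₀ ∈ K) (hh₀τ₀ : IsConj h₀ τ₀) (hτ₀ : τ₀ ∈ G₁)
    (hτ₀H : ConjClassAvoids G₁ H τ₀) {h : G} (hh : h ∈ K) (hh1 : h ≠ 1) :
    ∃ τ, IsConj h τ ∧ τ ∈ G₁ ∧ ConjClassAvoids G₁ H τ := by
  obtain ⟨c, rfl⟩ := isConj_iff.mp hh₀τ₀
  have hh₀1 : h₀ ≠ 1 := fun h₀1 => hτ₀H 1 G₁.one_mem (by simp [h₀1])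
  refine ⟨c * h * c⁻¹, isConj_iff.mpr ⟨c, rfl⟩, ?_, ?_⟩
  · refine zpowers_le.mpr hτ₀ (conj_mem_zpowers_conj c ?_)
    rwa [← eq_zpowers_of_card_prime hp hK hh₀ hh₀1]
  · refine hτ₀H.of_mem_zpowers (conj_mem_zpowers_conj c ?_)
    rwa [← eq_zpowers_of_card_prime hp hK hh hh1]

theorem LDiv.exists_subgroup_of_card_prime {ℓ δ : ℕ} (hℓ : ℓ.Prime) {H : Subgroup G}
    (hdiv : LDiv ℓ H δ) {K : Subgroup G} (hK : Nat.card K = ℓ) :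
    ∃ G₁ : Subgroup G, H ≤ G₁ ∧ ∀ σ ∉ H, orderOf σ = ℓ → (∃ h ∈ K, IsConj σ h) →
      ∃ τ, IsConj σ τ ∧ τ ∈ G₁ ∧ ConjClassAvoids G₁ H τ := by
  obtain ⟨Gs, hGsH, hGs⟩ := hdiv
  by_cases hσ₀ : ∃ σ₀ ∉ H, orderOf σ₀ = ℓ ∧ ∃ h₀ ∈ K, IsConj σ₀ h₀
  · obtain ⟨σ₀, hσ₀H, hσ₀ℓ, h₀, hh₀, hσ₀h₀⟩ := hσ₀
    obtain ⟨i, τ₀, hσ₀τ₀, hτ₀, hτ₀H⟩ := hGs σ₀ hσ₀H hσ₀ℓ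
    refine ⟨Gs i, hGsH i, fun σ hσH _ ⟨h, hh, hσh⟩ => ?_⟩
    have hh1 : h ≠ 1 := by
      rintro rfl
      exact hσH (isConj_one_right.mp hσh.symm ▸ H.one_mem)
    obtain ⟨τ, hhτ, hτ, hτH⟩ := exists_conjClassAvoids_of_mem_card_prime hℓ hK hh₀
      (hσ₀h₀.symm.trans hσ₀τ₀) hτ₀ hτ₀H hh hh1
    exact ⟨τ, hσh.trans hhτ, hτ, hτH⟩
  · exact ⟨⊤, le_top, fun σ hσH hσℓ hσK => absurd ⟨σ, hσH, hσℓ, hσK⟩ hσ₀⟩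

theorem LDiv.card_subgroups_card_prime_add_one {ℓ δ : ℕ} (hℓ : ℓ.Prime) {H : Subgroup G}
    [Finite H] (hdiv : LDiv ℓ H δ) :
    LDiv ℓ H (Nat.card {K : Subgroup G // K ≤ H ∧ Nat.card K = ℓ} + 1) := by
  set S := {K : Subgroup G // K ≤ H ∧ Nat.card K = ℓ}
  have := finite_subtype_le H (fun K => Nat.card K = ℓ)
  choose F hFH hF using fun K : S => hdiv.exists_subgroup_of_card_prime hℓ K.2.2
  let e := Finite.equivFin S
  refine ⟨Fin.cases ⊤ fun j => F (e.symm j), Fin.cases le_top fun j => hFH _, fun σ hσH hσℓ => ?_⟩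
  by_cases hσ : ∃ π, π * σ * π⁻¹ ∈ H
  · obtain ⟨π, hπ⟩ := hσ
    let K : S := ⟨zpowers (π * σ * π⁻¹), zpowers_le.mpr hπ, by
      rw [Nat.card_zpowers, ← hσℓ]
      simpa using (MulAut.conj π).orderOf_eq σ⟩
    obtain ⟨τ, hστ, hτ, hτH⟩ :=
      hF K σ hσH hσℓ ⟨_, mem_zpowers _, isConj_iff.mpr ⟨π, rfl⟩⟩
    exact ⟨(e K).succ, τ, hστ, by simpa using hτ, by simpa [ConjClassAvoids] using hτH⟩
  · exact ⟨0, σ, IsConj.refl σ, mem_top σ, fun π _ hπ => hσ ⟨π, hπ⟩⟩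

end

/-- If `G/H` is `ℓ`-divisible (`H` finite), then
`δ_ℓ(G/H) ≤ 1 + (|H| - 1)/(ℓ - 1)`; more precisely, `δ_ℓ(G/H)` is at most one
more than the number of subgroups of `H` of order `ℓ`. -/
theorem stmt8 {G : Type*} [Group G] (ℓ : ℕ) (hℓ : ℓ.Prime)
    (H : Subgroup G) [Finite H] (hdiv : ∃ δ, LDiv ℓ H δ) :
    sInf {δ | LDiv ℓ H δ} ≤ 1 + (Nat.card H - 1) / (ℓ - 1) ∧
      sInf {δ | LDiv ℓ H δ} ≤
        1 + Nat.card {K : Subgroup G // K ≤ H ∧ Nat.card K = ℓ} := by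
  obtain ⟨δ, hδ⟩ := hdiv
  have hle := Nat.sInf_le (s := {δ | LDiv ℓ H δ}) (hδ.card_subgroups_card_prime_add_one hℓ)
  have hcount := card_subgroups_card_prime_le hℓ H
  exact ⟨by omega, by omega⟩
end

section
/- Let H, N ≤ G with N normal in G, and set 𝒢 = G/N, ℋ = HN/N. If 𝒢/ℋ and HN/H are ℓ-divisible, then G/H is ℓ-divisible with δ_ℓ(G/H) ≤ δ_ℓ(𝒢/ℋ) + δ_ℓ(HN/H). -/
/-!
An element `σ ∉ H` of order `ℓ` either lies in `HN`, where the `b` subgroups witnessing the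
divisibility of `HN/H` handle it, or it does not; then its image in `G/N` still has prime
order `ℓ` and avoids `HN/N`, and the preimages of the `a` subgroups witnessing the divisibility
of `𝒢/ℋ` handle it. Both kinds of witness transfer along the inclusion `HN → G`, resp. the
projection `G → G/N`, since conjugating into `H` is detected after applying the map.
-/

section Separation

variable {G : Type*} [Group G]

/-- Some `τ ∈ cl_G(σ) ∩ K` has `cl_K(τ) ∩ H = ∅`. -/
def ConjSeparates (H K : Subgroup G) (σ : G) : Prop :=
  ∃ τ, IsConj σ τ ∧ τ ∈ K ∧ ∀ π ∈ K, π * τ * π⁻¹ ∉ H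

theorem ConjSeparates.map {A : Type*} [Group A] (f : A →* G) {H : Subgroup G}
    {K : Subgroup A} {σ : A} (h : ConjSeparates (H.comap f) K σ) :
    ConjSeparates H (K.map f) (f σ) := by
  obtain ⟨τ, hστ, hτK, hτ⟩ := h
  refine ⟨f τ, f.map_isConj hστ, K.mem_map_of_mem f hτK, ?_⟩
  rintro _ ⟨π, hπK, rfl⟩ hπτ
  exact hτ π hπK (by simpa using hπτ)

theorem ConjSeparates.comap_of_surjective {Q : Type*} [Group Q] {f : G →* Q}
    (hf : Function.Surjective f) {H : Subgroup G} {K : Subgroup Q} {σ : G}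
    (h : ConjSeparates (H.map f) K (f σ)) : ConjSeparates H (K.comap f) σ := by
  obtain ⟨τ, hστ, hτK, hτ⟩ := h
  obtain ⟨c, rfl⟩ := isConj_iff.mp hστ
  obtain ⟨d, rfl⟩ := hf c
  have hfτ : f (d * σ * d⁻¹) = f d * f σ * (f d)⁻¹ := by simp only [map_mul, map_inv]
  refine ⟨d * σ * d⁻¹, isConj_iff.mpr ⟨d, rfl⟩, by rwa [Subgroup.mem_comap, hfτ], ?_⟩
  intro π hπK hπτ
  exact hτ (f π) hπK (by simpa [hfτ] using H.mem_map_of_mem f hπτ)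

theorem ldiv_add_of_separates_or {ℓ a b : ℕ} {H : Subgroup G}
    (Gs : Fin a → Subgroup G) (Ks : Fin b → Subgroup G)
    (hGs : ∀ i, H ≤ Gs i) (hKs : ∀ j, H ≤ Ks j)
    (hsep : ∀ σ, σ ∉ H → orderOf σ = ℓ →
      (∃ i, ConjSeparates H (Gs i) σ) ∨ ∃ j, ConjSeparates H (Ks j) σ) :
    LDiv ℓ H (a + b) := by
  refine ⟨Fin.addCases Gs Ks, Fin.addCases (by simpa using hGs) (by simpa using hKs), ?_⟩
  intro σ hσH hσ
  show ∃ k, ConjSeparates H (Fin.addCases Gs Ks k) σ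
  rcases hsep σ hσH hσ with ⟨i, hi⟩ | ⟨j, hj⟩
  · exact ⟨Fin.castAdd b i, by rw [Fin.addCases_left]; exact hi⟩
  · exact ⟨Fin.natAdd a j, by rw [Fin.addCases_right]; exact hj⟩

end Separation

theorem QuotientGroup.mk'_notMem_map_of_notMem_sup {G : Type*} [Group G] {H N : Subgroup G}
    [N.Normal] {σ : G} (hσ : σ ∉ H ⊔ N) : QuotientGroup.mk' N σ ∉ H.map (QuotientGroup.mk' N) := by
  intro h
  have := Subgroup.mem_comap.mpr h
  rw [Subgroup.comap_map_eq, QuotientGroup.ker_mk'] at this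
  exact hσ this

theorem orderOf_map_eq_of_prime {G Q : Type*} [Group G] [Group Q] {ℓ : ℕ} (hℓ : ℓ.Prime)
    (f : G →* Q) {σ : G} (hσ : orderOf σ = ℓ) (hfσ : f σ ≠ 1) : orderOf (f σ) = ℓ := by
  have := Fact.mk hℓ
  exact orderOf_eq_prime (by rw [← map_pow, ← hσ, pow_orderOf_eq_one, map_one]) hfσ

/-- Let `H, N ≤ G` with `N ⊴ G`. If `(G/N)/(HN/N)` is `ℓ`-divisible with `a`
subgroups and `HN/H` is `ℓ`-divisible with `b` subgroups, then `G/H` is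
`ℓ`-divisible with `a + b` subgroups; in particular
`δ_ℓ(G/H) ≤ δ_ℓ(𝒢/ℋ) + δ_ℓ(HN/H)`. -/
theorem stmt12 {G : Type*} [Group G] (ℓ : ℕ) (hℓ : ℓ.Prime)
    (H N : Subgroup G) [N.Normal] (a b : ℕ)
    (hQ : LDiv ℓ (H.map (QuotientGroup.mk' N)) a)
    (hHN : LDiv ℓ (H.subgroupOf (H ⊔ N)) b) :
    LDiv ℓ H (a + b) := by
  obtain ⟨Qs, hHQs, hQs⟩ := hQ
  obtain ⟨Ks, hHKs, hKs⟩ := hHN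
  refine ldiv_add_of_separates_or (fun i => (Qs i).comap (QuotientGroup.mk' N))
    (fun j => (Ks j).map (H ⊔ N).subtype)
    (fun i => (H.le_comap_map _).trans (Subgroup.comap_mono (hHQs i)))
    (fun j => ?_) fun σ hσH hσ => ?_
  · calc H = (H.subgroupOf (H ⊔ N)).map (H ⊔ N).subtype := by
          rw [Subgroup.subgroupOf_map_subtype, inf_of_le_left le_sup_left]
      _ ≤ (Ks j).map (H ⊔ N).subtype := Subgroup.map_mono (hHKs j)
  by_cases hσHN : σ ∈ H ⊔ N
  · obtain ⟨j, hj⟩ := hKs ⟨σ, hσHN⟩ (by rwa [Subgroup.mem_subgroupOf])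
      (by rwa [Subgroup.orderOf_mk])
    exact Or.inr ⟨j, ConjSeparates.map (H ⊔ N).subtype hj⟩
  · have hσQ := QuotientGroup.mk'_notMem_map_of_notMem_sup hσHN
    have hσ1 : QuotientGroup.mk' N σ ≠ 1 := fun h => hσQ (h ▸ Subgroup.one_mem _)
    obtain ⟨i, hi⟩ := hQs _ hσQ (orderOf_map_eq_of_prime hℓ (QuotientGroup.mk' N) hσ hσ1)
    exact Or.inl ⟨i, ConjSeparates.comap_of_surjective (QuotientGroup.mk'_surjective N) hi⟩
end

section
/- Let G = N ⋊_φ H be a semidirect product with N and H finite abelian groups, ℓ a prime. Suppose that for every h ∈ H of order ℓ, φ(h) restricts to the identity on the Sylow ℓ-subgroup of N only if φ(h) is the identity on all of N. Then the pair G/H (H embedded canonically) is ℓ-divisible with δ_ℓ(G/H) ≤ 2. -/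
/-!
Write `σ = (n, h) ∈ N ⋊ H`. Conjugating `σ` by `(w, 1)` replaces `n` by `n · w / φ_h w`, and
the conjugates of `(c, h)` by elements of `M ⋊ H`, for an invariant `M ≤ N`, avoid `H` iff `c`
is not of the form `m / φ_h m` with `m ∈ M`. If `σ` has order `ℓ`, then `h ^ ℓ = 1` and
`∏_{i<ℓ} φ_h^i n = 1`; on the `ℓ'`-part of `n` raising to the `ℓ`-th power is invertible, so
that part is a coboundary and `σ` is conjugate to some `(a, h)` with `a` in the Sylow
`ℓ`-subgroup `M₁` of `N`. Either `a` is not an `M₁`-coboundary and `M₁ ⋊ H` works, or `n` is a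
coboundary, so `φ_h ≠ 1` and by hypothesis `φ_h` moves `M₁`. Then the nontrivial `ℓ`-group of
`M₁`-coboundaries has a nontrivial point `c` fixed by the Sylow `ℓ`-subgroup of `H`; `σ` is
conjugate to `(c, h)`, and `M₂ ⋊ H` works, where `M₂ ≤ M₁` is the part fixed by that Sylow
subgroup, on which `φ_h` acts trivially.
-/

open SemidirectProduct CommGroup

namespace MulAut

variable {N : Type*} [CommGroup N]

def coboundary (g : MulAut N) : N →* N where
  toFun x := x / g x
  map_one' := by simp
  map_mul' x y := by simp only [map_mul, mul_div_mul_comm]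

@[simp]
lemma coboundary_apply (g : MulAut N) (x : N) : coboundary g x = x / g x := rfl

lemma coboundary_apply_comm {g k : MulAut N} (hgk : Commute g k) (x : N) :
    coboundary g (k x) = k (coboundary g x) := by
  rw [coboundary_apply, coboundary_apply, map_div, ← MulAut.mul_apply, ← MulAut.mul_apply,
    hgk.eq]

def orbitNorm (g : MulAut N) (n : ℕ) : N →* N :=
  ∏ i ∈ Finset.range n, ((g ^ i : MulAut N) : N →* N)

lemma orbitNorm_apply (g : MulAut N) (n : ℕ) (x : N) :
    orbitNorm g n x = ∏ i ∈ Finset.range n, (g ^ i) x :=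
  MonoidHom.finsetProd_apply _ _ _

lemma div_pow_apply_mem_range_coboundary (g : MulAut N) (x : N) (i : ℕ) :
    x / (g ^ i) x ∈ (coboundary g).range := by
  induction i with
  | zero => simp
  | succ i ih =>
    rw [pow_succ', MulAut.mul_apply, ← div_mul_div_cancel _ ((g ^ i) x)]
    exact mul_mem ih ⟨_, rfl⟩

lemma pow_div_orbitNorm_mem_range_coboundary (g : MulAut N) (n : ℕ) (x : N) :
    x ^ n / orbitNorm g n x ∈ (coboundary g).range := by
  have hprod : x ^ n / orbitNorm g n x = ∏ i ∈ Finset.range n, x / (g ^ i) x := by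
    rw [Finset.prod_div_distrib, Finset.prod_const, Finset.card_range, orbitNorm_apply]
  rw [hprod]
  exact prod_mem fun i _ => div_pow_apply_mem_range_coboundary g x i

lemma mem_range_coboundary_of_orbitNorm_eq_one {g : MulAut N} {n : ℕ} {x : N}
    (hx : orbitNorm g n x = 1) (hn : n.Coprime (orderOf x)) : x ∈ (coboundary g).range := by
  obtain ⟨m, hm⟩ := exists_pow_eq_self_of_coprime hn
  have hxn := pow_div_orbitNorm_mem_range_coboundary g n x
  rw [hx, div_one] at hxn
  exact hm ▸ pow_mem hxn m

end MulAut

open MulAut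

lemma CommGroup.map_mem_primaryComponent {N N' F : Type*} [CommGroup N] [CommGroup N']
    [FunLike F N N'] [MonoidHomClass F N N'] {p : ℕ} (f : F) {x : N}
    (hx : x ∈ primaryComponent N p) : f x ∈ primaryComponent N' p :=
  hx.imp fun _ hk => by rw [← map_pow, hk, map_one]

lemma CommGroup.exists_mem_primaryComponent_mul_coprime {N : Type*} [CommGroup N] {p : ℕ}
    (hp : p.Prime) (x : N) (hx : IsOfFinOrder x) :
    ∃ a ∈ primaryComponent N p, ∃ b ∈ Subgroup.zpowers x, x = a * b ∧ p.Coprime (orderOf b) := by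
  obtain ⟨e, r, hpr, hd⟩ := Nat.exists_eq_pow_mul_and_not_dvd hx.orderOf_pos.ne' p hp.one_lt.ne'
  have hcop : (p ^ e).Coprime r := (hp.coprime_iff_not_dvd.mpr hpr).pow_left e
  obtain ⟨u, v, huv⟩ : ∃ u v : ℤ, (p ^ e : ℕ) * u + r * v = 1 := by
    refine ⟨Nat.gcdA (p ^ e) r, Nat.gcdB (p ^ e) r, ?_⟩
    rw [← Nat.gcd_eq_gcd_ab, hcop.gcd_eq_one, Nat.cast_one]
  have hy : x ^ r ∈ primaryComponent N p :=
    ⟨e, by rw [← pow_mul, mul_comm, ← hd, pow_orderOf_eq_one]⟩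
  have hz : orderOf (x ^ p ^ e) ∣ r :=
    orderOf_dvd_of_pow_eq_one (by rw [← pow_mul, ← hd, pow_orderOf_eq_one])
  refine ⟨(x ^ r) ^ v, zpow_mem hy v, (x ^ p ^ e) ^ u, zpow_mem (Subgroup.npow_mem_zpowers x _) u,
    ?_, (hp.coprime_iff_not_dvd.mpr hpr).coprime_dvd_right
      ((orderOf_dvd_of_mem_zpowers (Subgroup.zpow_mem_zpowers _ u)).trans hz)⟩
  rw [← zpow_natCast, ← zpow_natCast, ← zpow_mul, ← zpow_mul, ← zpow_add, add_comm, huv, zpow_one]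

lemma IsPGroup.exists_ne_one_forall_apply_eq {p : ℕ} [Fact p.Prime] {Q N : Type*} [Group Q]
    [Group N] (hQ : IsPGroup p Q) (ψ : Q →* MulAut N) {X : Subgroup N} [Finite X]
    (hX : IsPGroup p X) (hXψ : ∀ q, ∀ x ∈ X, ψ q x ∈ X) (hX1 : X ≠ ⊥) :
    ∃ c ∈ X, c ≠ 1 ∧ ∀ q, ψ q c = c := by
  let : MulAction Q N := MulAction.compHom N ψ
  let S : SubMulAction Q N := ⟨X, fun q _ hx => hXψ q _ hx⟩
  have : Nontrivial X := (Subgroup.nontrivial_iff_ne_bot X).mpr hX1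
  obtain ⟨k, hk, hcard⟩ := hX.nontrivial_iff_card.mp this
  have hdvd : p ∣ Nat.card S := hcard ▸ dvd_pow_self p hk.ne'
  obtain ⟨c, hc, hc1⟩ := hQ.exists_fixed_point_of_prime_dvd_card_of_fixed_point S hdvd
    (a := ⟨1, X.one_mem⟩) fun q => Subtype.ext (map_one (ψ q))
  exact ⟨c, c.2, fun h => hc1 (Subtype.ext h.symm), fun q => congrArg Subtype.val (hc q)⟩

namespace SemidirectProduct

section

variable {N G : Type*} [Group N] [Group G] {φ : G →* MulAut N}

lemma mem_range_inr_iff {x : N ⋊[φ] G} : x ∈ (inr : G →* N ⋊[φ] G).range ↔ x.left = 1 :=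
  ⟨by rintro ⟨g, rfl⟩; rfl, fun h => ⟨x.right, by ext <;> simp [h]⟩⟩

lemma right_pow (x : N ⋊[φ] G) (n : ℕ) : (x ^ n).right = x.right ^ n :=
  map_pow rightHom x n

def subgroupLeft (M : Subgroup N) (hM : ∀ g, ∀ x ∈ M, φ g x ∈ M) : Subgroup (N ⋊[φ] G) where
  carrier := {x | x.left ∈ M}
  one_mem' := M.one_mem
  mul_mem' hx hy := M.mul_mem hx (hM _ _ hy)
  inv_mem' hx := hM _ _ (M.inv_mem hx)

lemma range_inr_le_subgroupLeft {M : Subgroup N} (hM : ∀ g, ∀ x ∈ M, φ g x ∈ M) :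
    (inr : G →* N ⋊[φ] G).range ≤ subgroupLeft M hM := by
  rintro _ ⟨g, rfl⟩
  exact M.one_mem

end

section

variable {N G : Type*} [CommGroup N] [Group G] {φ : G →* MulAut N}

lemma left_pow (x : N ⋊[φ] G) (n : ℕ) : (x ^ n).left = orbitNorm (φ x.right) n x.left := by
  induction n with
  | zero => simp [orbitNorm_apply]
  | succ n ih => rw [pow_succ, mul_left, ih, right_pow, orbitNorm_apply, orbitNorm_apply,
      Finset.prod_range_succ, map_pow]

end

section

variable {N G : Type*} [CommGroup N] [CommGroup G] {φ : G →* MulAut N}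

lemma conj_right (x y : N ⋊[φ] G) : (x * y * x⁻¹).right = y.right := by
  simp [mul_comm x.right]

lemma conj_left (x y : N ⋊[φ] G) :
    (x * y * x⁻¹).left = φ x.right y.left * coboundary (φ y.right) x.left := by
  rw [mul_left, mul_left, inv_left, mul_right, ← MulAut.mul_apply, ← map_mul, mul_comm x.right,
    mul_inv_cancel_right, coboundary_apply, map_inv, div_eq_mul_inv]
  ac_rfl

lemma isConj_mk_of_div_mem_range_coboundary (y : N ⋊[φ] G) {c : N}
    (hc : c / y.left ∈ (coboundary (φ y.right)).range) : IsConj y ⟨c, y.right⟩ := by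
  obtain ⟨w, hw⟩ := hc
  refine isConj_iff.mpr ⟨inl w, ?_⟩
  ext
  · rw [conj_left, left_inl, right_inl, map_one, MulAut.one_apply, hw, mul_div_cancel]
  · rw [conj_right]

lemma conj_notMem_range_inr {M : Subgroup N} (hM : ∀ g, ∀ x ∈ M, φ g x ∈ M) {y : N ⋊[φ] G}
    (hy : y.left ∉ M.map (coboundary (φ y.right))) :
    ∀ x ∈ subgroupLeft M hM, x * y * x⁻¹ ∉ (inr : G →* N ⋊[φ] G).range := by
  intro x hx hxy
  rw [mem_range_inr_iff, conj_left, mul_eq_one_iff_eq_inv, ← map_inv] at hxy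
  refine hy ⟨φ x.right⁻¹ x.left⁻¹, hM _ _ (inv_mem hx), ?_⟩
  rw [coboundary_apply_comm ((Commute.all _ _).map φ), ← hxy, ← MulAut.mul_apply, ← map_mul,
    inv_mul_cancel, map_one, MulAut.one_apply]

end

end SemidirectProduct

section

variable {N H : Type*} [CommGroup N] [CommGroup H] (ℓ : ℕ) (φ : H →* MulAut N)

def fixedPrimaryComponent : Subgroup N where
  carrier := {x | x ∈ primaryComponent N ℓ ∧ ∀ k ∈ primaryComponent H ℓ, φ k x = x}
  one_mem' := ⟨one_mem _, fun k _ => map_one (φ k)⟩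
  mul_mem' := fun ⟨hx, hx'⟩ ⟨hy, hy'⟩ =>
    ⟨mul_mem hx hy, fun k hk => by rw [map_mul, hx' k hk, hy' k hk]⟩
  inv_mem' := fun ⟨hx, hx'⟩ => ⟨inv_mem hx, fun k hk => by rw [map_inv, hx' k hk]⟩

variable {ℓ φ}

lemma apply_mem_fixedPrimaryComponent (h : H) {x : N} (hx : x ∈ fixedPrimaryComponent ℓ φ) :
    φ h x ∈ fixedPrimaryComponent ℓ φ := by
  refine ⟨map_mem_primaryComponent (φ h) hx.1, fun k hk => ?_⟩
  rw [← MulAut.mul_apply, ← map_mul, mul_comm, map_mul, MulAut.mul_apply, hx.2 k hk]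

lemma map_coboundary_fixedPrimaryComponent {h : H} (hh : h ∈ primaryComponent H ℓ) :
    (fixedPrimaryComponent ℓ φ).map (coboundary (φ h)) = ⊥ := by
  rw [eq_bot_iff]
  rintro _ ⟨x, hx, rfl⟩
  rw [Subgroup.mem_bot, coboundary_apply, hx.2 h hh, div_self']

lemma exists_ne_one_mem_fixedPrimaryComponent [Finite N] (hℓ : ℓ.Prime) (h : H)
    (hne : (primaryComponent N ℓ).map (coboundary (φ h)) ≠ ⊥) :
    ∃ c ∈ fixedPrimaryComponent ℓ φ, c ≠ 1 ∧ c ∈ (coboundary (φ h)).range := by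
  have := Fact.mk hℓ
  have hX : (primaryComponent N ℓ).map (coboundary (φ h)) ≤ primaryComponent N ℓ := by
    rintro _ ⟨x, hx, rfl⟩
    exact map_mem_primaryComponent _ hx
  have hXφ : ∀ k : primaryComponent H ℓ, ∀ x ∈ (primaryComponent N ℓ).map (coboundary (φ h)),
      φ k x ∈ (primaryComponent N ℓ).map (coboundary (φ h)) := by
    rintro k _ ⟨x, hx, rfl⟩
    exact ⟨φ k x, map_mem_primaryComponent _ hx,
      coboundary_apply_comm ((Commute.all _ _).map φ) x⟩
  obtain ⟨c, hcX, hc1, hc⟩ := primaryComponent.isPGroup.exists_ne_one_forall_apply_eq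
    (φ.comp (primaryComponent H ℓ).subtype) (primaryComponent.isPGroup.to_le hX) hXφ hne
  exact ⟨c, ⟨hX hcX, fun k hk => hc ⟨k, hk⟩⟩, hc1, Subgroup.map_le_range _ _ hcX⟩

lemma map_coboundary_primaryComponent_ne_bot (hℓ : ℓ.Prime)
    (hyp : ∀ h : H, orderOf h = ℓ → (∀ x ∈ primaryComponent N ℓ, φ h x = x) → φ h = 1)
    {h : H} (hh : h ^ ℓ = 1) (hφ : φ h ≠ 1) :
    (primaryComponent N ℓ).map (coboundary (φ h)) ≠ ⊥ := by
  have := Fact.mk hℓ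
  have hord : orderOf h = ℓ := orderOf_eq_prime hh fun h1 => hφ (by rw [h1, map_one])
  refine fun hbot => hφ (hyp h hord fun x hx => ?_)
  have : coboundary (φ h) x = 1 := (Subgroup.mem_bot).mp (hbot ▸ Subgroup.mem_map_of_mem _ hx)
  exact (div_eq_one.mp this).symm

lemma exists_div_mem_range_coboundary_notMem_map [Finite N] (hℓ : ℓ.Prime)
    (hyp : ∀ h : H, orderOf h = ℓ → (∀ x ∈ primaryComponent N ℓ, φ h x = x) → φ h = 1)
    {h : H} {n : N} (hh : h ^ ℓ = 1) (hn : orbitNorm (φ h) ℓ n = 1) (hn1 : n ≠ 1) :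
    ∃ c, c / n ∈ (coboundary (φ h)).range ∧
      ((c ∈ primaryComponent N ℓ ∧ c ∉ (primaryComponent N ℓ).map (coboundary (φ h))) ∨
       (c ∈ fixedPrimaryComponent ℓ φ ∧
          c ∉ (fixedPrimaryComponent ℓ φ).map (coboundary (φ h)))) := by
  obtain ⟨a, ha, b, hb, rfl, hbℓ⟩ :=
    exists_mem_primaryComponent_mul_coprime hℓ n (isOfFinOrder_of_finite n)
  have hbR : b ∈ (coboundary (φ h)).range :=
    mem_range_coboundary_of_orbitNorm_eq_one
      (Subgroup.zpowers_le.mpr (MonoidHom.mem_ker.mpr hn) hb) hbℓ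
  by_cases haR : a ∈ (primaryComponent N ℓ).map (coboundary (φ h))
  · have hφ : φ h ≠ 1 := by
      rintro hφ
      obtain ⟨t, -, rfl⟩ := haR
      obtain ⟨y, rfl⟩ := hbR
      simp [hφ] at hn1
    obtain ⟨c, hcM, hc1, hcR⟩ := exists_ne_one_mem_fixedPrimaryComponent hℓ h
      (map_coboundary_primaryComponent_ne_bot hℓ hyp hh hφ)
    refine ⟨c, div_mem hcR (mul_mem (Subgroup.map_le_range _ _ haR) hbR), .inr ⟨hcM, ?_⟩⟩
    rwa [map_coboundary_fixedPrimaryComponent ⟨1, by rwa [pow_one]⟩, Subgroup.mem_bot]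
  · exact ⟨a, by rw [div_mul_cancel_left]; exact inv_mem hbR, .inl ⟨ha, haR⟩⟩

end

theorem stmt18_general {N H : Type*} [CommGroup N] [CommGroup H] [Finite N]
    (ℓ : ℕ) (hℓ : ℓ.Prime) (φ : H →* MulAut N)
    (hyp : ∀ h : H, orderOf h = ℓ →
      (∀ x : N, (∃ m : ℕ, orderOf x = ℓ ^ m) → φ h x = x) →
      ∀ x : N, φ h x = x) :
    LDiv ℓ (SemidirectProduct.inr : H →* N ⋊[φ] H).range 2 := by
  have := Fact.mk hℓ
  have hinv₁ : ∀ k, ∀ x ∈ primaryComponent N ℓ, φ k x ∈ primaryComponent N ℓ :=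
    fun k _ => map_mem_primaryComponent (φ k)
  have hinv₂ : ∀ k, ∀ x ∈ fixedPrimaryComponent ℓ φ, φ k x ∈ fixedPrimaryComponent ℓ φ :=
    fun k _ => apply_mem_fixedPrimaryComponent k
  refine ⟨![subgroupLeft _ hinv₁, subgroupLeft _ hinv₂], fun i => ?_, fun σ hσH hσ => ?_⟩
  · fin_cases i
    exacts [range_inr_le_subgroupLeft hinv₁, range_inr_le_subgroupLeft hinv₂]
  have hσℓ : σ ^ ℓ = 1 := hσ ▸ pow_orderOf_eq_one σ
  have hh : σ.right ^ ℓ = 1 := by rw [← right_pow, hσℓ, one_right]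
  have hn : orbitNorm (φ σ.right) ℓ σ.left = 1 := by rw [← left_pow, hσℓ, one_left]
  have hn1 : σ.left ≠ 1 := fun h => hσH (mem_range_inr_iff.mpr h)
  have hyp' : ∀ h : H, orderOf h = ℓ → (∀ x ∈ primaryComponent N ℓ, φ h x = x) → φ h = 1 :=
    fun h hh hfix => MulEquiv.ext <|
      hyp h hh fun x hx => hfix x (mem_primaryComponent_iff_orderOf.mpr hx)
  obtain ⟨c, hcn, ⟨hcM, hcM'⟩ | ⟨hcM, hcM'⟩⟩ :=
    exists_div_mem_range_coboundary_notMem_map hℓ hyp' hh hn hn1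
  · exact ⟨0, _, isConj_mk_of_div_mem_range_coboundary σ hcn, hcM,
      conj_notMem_range_inr hinv₁ hcM'⟩
  · exact ⟨1, _, isConj_mk_of_div_mem_range_coboundary σ hcn, hcM,
      conj_notMem_range_inr hinv₂ hcM'⟩

/-- Let `G = N ⋊_φ H` with `N`, `H` finite abelian. If for every `h ∈ H` of
order `ℓ`, `φ(h)` being the identity on all elements of `ℓ`-power order of `N`
(the Sylow `ℓ`-subgroup) implies `φ(h)` is the identity on `N`, then `G/H` is
`ℓ`-divisible with `δ_ℓ(G/H) ≤ 2`. -/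
theorem stmt18 {N H : Type*} [CommGroup N] [CommGroup H] [Finite N] [Finite H]
    (ℓ : ℕ) (hℓ : ℓ.Prime) (φ : H →* MulAut N)
    (hyp : ∀ h : H, orderOf h = ℓ →
      (∀ x : N, (∃ m : ℕ, orderOf x = ℓ ^ m) → φ h x = x) →
      ∀ x : N, φ h x = x) :
    LDiv ℓ (SemidirectProduct.inr : H →* N ⋊[φ] H).range 2 :=
  stmt18_general ℓ hℓ φ hyp
end
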